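/- arXiv:1208.5268 — 5 statements merged into one kernel-verified Lean document; each statement's English description precedes it below -/
import Mathlib

section
/- (Completeness of Armstrong's Axioms) Let T be a finite set of dependence atoms over a finite set of variables, and let =(y⃗,x⃗) be a dependence atom. Then =(y⃗,x⃗) is derivable from T using Armstrong's axioms (reflexivity, augmentation, permutation/union, and transitivity) if and only if every team that satisfies all atoms in T also satisfies =(y⃗,x⃗). -/
/-- `agrees s s' w`: assignments `s` and `s'` agree on all variables in `w`. -/
def agrees {V M : Type*} (s s' : V → M) (w : Set V) : Prop := ∀ v ∈ w, s v = s' v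

/-- The team `X` satisfies the functional dependence atom `=(y,x)`. -/
def depAtom {V M : Type*} (X : Set (V → M)) (y x : Set V) : Prop :=
  ∀ s ∈ X, ∀ s' ∈ X, agrees s s' y → agrees s s' x

/-- The team `X` satisfies the conditional independence atom `y ⊥_x z`. -/
def condIndep {V M : Type*} (X : Set (V → M)) (y x z : Set V) : Prop :=
  ∀ s ∈ X, ∀ s' ∈ X, agrees s s' x →
    ∃ s'' ∈ X, agrees s'' s x ∧ agrees s'' s y ∧ agrees s'' s' z

/-- The team `X` satisfies the independence atom `a ⊥ b` (single variables). -/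
def indepAtom {V M : Type*} (X : Set (V → M)) (a b : V) : Prop :=
  ∀ s ∈ X, ∀ s' ∈ X, ∃ s'' ∈ X, s'' b = s b ∧ s'' a = s' a

/-- Derivability of dependence atoms from a set `T` of atoms by Armstrong's axioms:
reflexivity, augmentation, union (permutation is automatic for set-based atoms),
and transitivity. -/
inductive ArmDeriv {V : Type*} [DecidableEq V] (T : Finset (Finset V × Finset V)) :
    Finset V → Finset V → Prop
  | mem (y x : Finset V) (h : (y, x) ∈ T) : ArmDeriv T y x
  | refl (x : Finset V) : ArmDeriv T x x
  | aug (y z x : Finset V) (hyz : y ⊆ z) (h : ArmDeriv T y x) : ArmDeriv T z x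
  | union (y x₁ x₂ : Finset V) (h₁ : ArmDeriv T y x₁) (h₂ : ArmDeriv T y x₂) :
      ArmDeriv T y (x₁ ∪ x₂)
  | trans (y z x : Finset V) (h₁ : ArmDeriv T y z) (h₂ : ArmDeriv T z x) : ArmDeriv T y x


/-! Soundness is a rule-by-rule check. For completeness, let `C` be the set of variables `v` with
`y ⊢ {v}`. It contains `y` and is closed under every atom of `T`, so the team of the two rows
`fun _ => True` and `(· ∈ C)`, which agree exactly on `C`, satisfies `T`. If it satisfies
`=(y,x)` as well, then `x ⊆ C`, i.e. `y ⊢ x`. -/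

section Team

variable {V M : Type*}

theorem agrees_comm {s s' : V → M} {w : Set V} : agrees s s' w ↔ agrees s' s w :=
  ⟨fun h v hv => (h v hv).symm, fun h v hv => (h v hv).symm⟩

theorem agrees_true_mem_iff {C w : Set V} : agrees (fun _ => True) (· ∈ C) w ↔ w ⊆ C := by
  simp [agrees, Set.subset_def]

theorem depAtom_pair_iff {s s' : V → M} {y x : Set V} :
    depAtom {s, s'} y x ↔ (agrees s s' y → agrees s s' x) := by
  refine ⟨fun h => h s (by simp) s' (by simp), fun h => ?_⟩
  rintro t (rfl | rfl) t' (rfl | rfl) hag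
  · exact fun _ _ => rfl
  · exact h hag
  · exact agrees_comm.mp (h (agrees_comm.mp hag))
  · exact fun _ _ => rfl

end Team

namespace ArmDeriv

variable {V : Type*} [DecidableEq V] {T : Finset (Finset V × Finset V)}

theorem depAtom {M : Type*} {X : Set (V → M)} (hT : ∀ a ∈ T, _root_.depAtom X a.1 a.2)
    {y x : Finset V} (h : ArmDeriv T y x) : _root_.depAtom X y x := by
  induction h with
  | mem y x h => exact hT _ h
  | refl x => exact fun _ _ _ _ hag => hag
  | aug y z x hyz _ ih => exact fun s hs s' hs' hag => ih s hs s' hs' fun v hv => hag v (hyz hv)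
  | union y x₁ x₂ _ _ ih₁ ih₂ =>
    intro s hs s' hs' hag v hv
    rcases Finset.mem_union.mp hv with h | h
    · exact ih₁ s hs s' hs' hag v h
    · exact ih₂ s hs s' hs' hag v h
  | trans y z x _ _ ih₁ ih₂ => exact fun s hs s' hs' hag => ih₂ s hs s' hs' (ih₁ s hs s' hs' hag)

theorem of_subset {y x : Finset V} (h : x ⊆ y) : ArmDeriv T y x :=
  .aug x y x h (.refl x)

theorem of_forall_singleton {y : Finset V} (x : Finset V) (h : ∀ v ∈ x, ArmDeriv T y {v}) :
    ArmDeriv T y x := by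
  induction x using Finset.induction_on with
  | empty => exact of_subset (Finset.empty_subset y)
  | insert a s _ ih =>
    rw [Finset.insert_eq]
    exact .union y {a} s (h a (Finset.mem_insert_self a s))
      (ih fun v hv => h v (Finset.mem_insert_of_mem hv))

variable (T) in
def closure (y : Finset V) : Set V := {v | ArmDeriv T y {v}}

theorem iff_subset_closure {y x : Finset V} : ArmDeriv T y x ↔ ↑x ⊆ closure T y :=
  ⟨fun h _ hv => .trans _ _ _ h (of_subset (Finset.singleton_subset_iff.mpr hv)),
    fun h => of_forall_singleton x h⟩

theorem subset_closure (y : Finset V) : ↑y ⊆ closure T y :=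
  iff_subset_closure.mp (.refl y)

theorem closure_closed {y : Finset V} {a : Finset V × Finset V} (ha : a ∈ T)
    (h : ↑a.1 ⊆ closure T y) : ↑a.2 ⊆ closure T y :=
  iff_subset_closure.mp (.trans _ _ _ (iff_subset_closure.mpr h) (.mem _ _ ha))

theorem of_forall_depAtom {y x : Finset V}
    (hsem : ∀ (M : Type) (X : Set (V → M)),
      (∀ a ∈ T, _root_.depAtom X a.1 a.2) → _root_.depAtom X y x) :
    ArmDeriv T y x := by
  have hteam := hsem Prop {fun _ => True, (· ∈ closure T y)} fun a ha =>
    depAtom_pair_iff.mpr fun hag =>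
      agrees_true_mem_iff.mpr (closure_closed ha (agrees_true_mem_iff.mp hag))
  rw [depAtom_pair_iff, agrees_true_mem_iff, agrees_true_mem_iff] at hteam
  exact iff_subset_closure.mpr (hteam (subset_closure y))

end ArmDeriv

theorem stmt5_general {V : Type*} [DecidableEq V]
    (T : Finset (Finset V × Finset V)) (y x : Finset V) :
    ArmDeriv T y x ↔
      ∀ (M : Type) (X : Set (V → M)),
        (∀ a ∈ T, depAtom X (↑a.1) (↑a.2)) → depAtom X (↑y) (↑x) :=
  ⟨fun h _ _ hT => h.depAtom hT, ArmDeriv.of_forall_depAtom⟩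

theorem stmt5 {V : Type*} [Fintype V] [DecidableEq V]
    (T : Finset (Finset V × Finset V)) (y x : Finset V) :
    ArmDeriv T y x ↔
      ∀ (M : Type) (X : Set (V → M)),
        (∀ a ∈ T, depAtom X (↑a.1) (↑a.2)) → depAtom X (↑y) (↑x) :=
  stmt5_general T y x
end

section
/- (Completeness of the Independence Axioms) Let T be a finite set of independence atoms of the form u ⊥ v over a set of variables. Then y ⊥ x is derivable from T using the Symmetry Rule (from x ⊥ y infer y ⊥ x) and the Constancy Rule (from x ⊥ x infer y ⊥ x for any y) if and only if every team satisfying all atoms in T also satisfies y ⊥ x. -/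
/-- Derivability of independence atoms from `T` using the Symmetry and Constancy rules. -/
inductive IndDeriv {V : Type*} (T : Finset (V × V)) : V → V → Prop
  | mem (u v : V) (h : (u, v) ∈ T) : IndDeriv T u v
  | symm (u v : V) (h : IndDeriv T u v) : IndDeriv T v u
  | const (u v : V) (h : IndDeriv T v v) : IndDeriv T u v

theorem stmt10 {V : Type*} [DecidableEq V] (T : Finset (V × V)) (y x : V) :
    IndDeriv T y x ↔
      ∀ (M : Type) (X : Set (V → M)),
        (∀ a ∈ T, indepAtom X a.1 a.2) → indepAtom X y x := by
  classical
  constructor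
  · intro h M X hT
    induction h with
    | mem u v hm => exact hT _ hm
    | symm u v h ih =>
      intro s hs s' hs'
      obtain ⟨s'', hs'', h1, h2⟩ := ih s' hs' s hs
      exact ⟨s'', hs'', h2, h1⟩
    | const u v h ih =>
      intro s hs s' hs'
      obtain ⟨s'', hs'', h1, h2⟩ := ih s hs s' hs'
      exact ⟨s', hs', h2.symm.trans h1, rfl⟩
  · intro hsem
    by_contra hnd
    have hx : ¬ IndDeriv T x x := fun h => hnd (IndDeriv.const y x h)
    have hy : ¬ IndDeriv T y y := fun h => hnd (IndDeriv.symm x y (IndDeriv.const x y h))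
    have hxy : ¬ IndDeriv T x y := fun h => hnd (IndDeriv.symm x y h)
    set X : Set (V → Bool) :=
      {s | (∀ c, IndDeriv T c c → s c = true) ∧ s x = s y} with hX
    have hTX : ∀ a ∈ T, indepAtom X a.1 a.2 := by
      rintro ⟨a, b⟩ hab
      intro s hs s' hs'
      obtain ⟨hsC, hsxy⟩ := hs
      obtain ⟨hs'C, hs'xy⟩ := hs'
      by_cases hab_eq : a = b
      · subst hab_eq
        have haa : IndDeriv T a a := IndDeriv.mem a a hab
        refine ⟨s, ⟨hsC, hsxy⟩, rfl, ?_⟩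
        rw [hsC a haa, hs'C a haa]
      · by_cases ha : a = x ∨ a = y
        · by_cases hb : b = x ∨ b = y
          · exfalso
            rcases ha with ha | ha <;> rcases hb with hb | hb
            · exact hab_eq (ha.trans hb.symm)
            · exact hxy (IndDeriv.mem x y (by rw [← ha, ← hb]; exact hab))
            · exact hnd (IndDeriv.mem y x (by rw [← ha, ← hb]; exact hab))
            · exact hab_eq (ha.trans hb.symm)
          · push_neg at hb
            refine ⟨fun v => if v = b then s b else s' v, ⟨?_, ?_⟩, ?_, ?_⟩
            · intro c hc
              by_cases hcb : c = b
              · simp only [hcb, if_pos rfl]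
                exact hsC b (hcb ▸ hc)
              · simp only [if_neg hcb]
                exact hs'C c hc
            · simp only [if_neg (fun h : x = b => hb.1 h.symm), if_neg (fun h : y = b => hb.2 h.symm)]
              exact hs'xy
            · simp only [if_pos rfl, if_true, eq_self_iff_true, ite_true]
            · simp only [if_neg hab_eq]
        · push_neg at ha
          refine ⟨fun v => if v = a then s' a else s v, ⟨?_, ?_⟩, ?_, ?_⟩
          · intro c hc
            by_cases hca : c = a
            · simp only [hca, if_pos rfl]
              exact hs'C a (hca ▸ hc)
            · simp only [if_neg hca]
              exact hsC c hc
          · simp only [if_neg (fun h : x = a => ha.1 h.symm), if_neg (fun h : y = a => ha.2 h.symm)]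
            exact hsxy
          · simp only [if_neg (fun h : b = a => hab_eq h.symm)]
          · simp only [if_pos rfl, if_true, eq_self_iff_true, ite_true]
    have hind := hsem Bool X hTX
    have hs0 : (fun _ : V => true) ∈ X := ⟨fun _ _ => rfl, rfl⟩
    have hs1 : (fun v => if IndDeriv T v v then true else false) ∈ X := by
      refine ⟨fun c hc => if_pos hc, ?_⟩
      simp only [if_neg hx, if_neg hy]
    obtain ⟨s'', ⟨_, hxy''⟩, h1, h2⟩ := hind _ hs0 _ hs1
    simp only [if_neg hy] at h2
    rw [hxy'', h2] at h1
    exact Bool.false_ne_true h1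
end

section
/- (First Transitivity Rule) If a team X satisfies x⃗ ⊥_{z⃗} y⃗ and u⃗ ⊥_{z⃗x⃗} y⃗, then X satisfies u⃗ ⊥_{z⃗} y⃗. -/
theorem stmt17 {V M : Type*} (X : Set (V → M)) (x y z u : Set V)
    (h1 : condIndep X x z y) (h2 : condIndep X u (z ∪ x) y) :
    condIndep X u z y := by
  intro s hs s' hs' hzs
  obtain ⟨t, ht, htz, htx, hty⟩ := h1 s hs s' hs' hzs
  obtain ⟨w, hw, hwzx, hwu, hwy⟩ := h2 s hs t ht (by
    intro v hv
    cases hv with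
    | inl hv => exact (htz v hv).symm
    | inr hv => exact (htx v hv).symm)
  exact ⟨w, hw, fun v hv => hwzx v (Or.inl hv), hwu,
    fun v hv => (hwy v hv).trans (hty v hv)⟩
end

section
/- (Second Transitivity Rule) If a team X satisfies y⃗ ⊥_{z⃗} y⃗ and z⃗x⃗ ⊥_{y⃗} u⃗, then X satisfies x⃗ ⊥_{z⃗} u⃗. -/
theorem stmt18 {V M : Type*} (X : Set (V → M)) (x y z u : Set V)
    (h1 : condIndep X y z y) (h2 : condIndep X (z ∪ x) y u) :
    condIndep X x z u := by
  intro s hs s' hs' hz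
  -- From h1, s and s' agree on y
  obtain ⟨t, _, htz, hty, hty'⟩ := h1 s hs s' hs' hz
  have hy : agrees s s' y := fun v hv => (hty v hv).symm.trans (hty' v hv)
  obtain ⟨s'', hs'', hsy, hszx, hsu⟩ := h2 s hs s' hs' hy
  exact ⟨s'', hs'', fun v hv => hszx v (Set.mem_union_left _ hv),
    fun v hv => hszx v (Set.mem_union_right _ hv), hsu⟩
end

section
/- If a team X satisfies =({x,u},{v}) (i.e., x and u jointly functionally determine v) and X satisfies the conditional independence atom v ⊥_u x, then X satisfies =({u},{v}) (u alone determines v). -/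
theorem stmt19 {V M : Type*} (X : Set (V → M)) (x u v : V)
    (h1 : depAtom X {x, u} {v}) (h2 : condIndep X {v} {u} {x}) :
    depAtom X {u} {v} := by
  intro s hs s' hs' hu w hw
  rcases hw with rfl
  have hu' : s u = s' u := hu u rfl
  obtain ⟨t, ht, htu, htv, htx⟩ := h2 s hs s' hs' (fun a ha => by rcases ha with rfl; exact hu')
  have hagree : agrees t s' {x, u} := by
    intro a ha
    rcases ha with rfl | rfl
    · exact htx a rfl
    · exact (htu a rfl).trans hu'
  have := h1 t ht s' hs' hagree w rfl
  exact (htv w rfl).symm.trans this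
end
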